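/- arXiv:1201.3714 — 4 statements merged into one kernel-verified Lean document; each statement's English description precedes it below -/
import Mathlib

section
/- Let g be a finite-dimensional real Lie algebra equipped with an ad-invariant inner product ⟨·,·⟩ (i.e. ⟨[Z,X],Y⟩ = −⟨X,[Z,Y]⟩ for all X,Y,Z ∈ g), and let X, V ∈ g. Then the Lie ideal of g generated by the set [g,X] = {[Y,X] : Y ∈ g} is orthogonal to the Lie ideal generated by V if and only if the Lie ideal of g generated by [g,V] = {[Y,V] : Y ∈ g} is orthogonal to the Lie ideal generated by X. -/
/-!
Let `I` be the ideal generated by `[g, X]`. Every `b` in the ideal generated by `X` satisfies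
`[Z, b] ∈ I` for all `Z` (the ideal generated by `X` lies in the normalizer of `I`), so if `I` is
orthogonal to `V`, invariance gives `⟨b, [Z, V]⟩ = -⟨[Z, b], V⟩ = 0`. Since the orthogonal
complement of an ideal under an invariant form is again an ideal, the whole ideal generated by
`[g, V]` is orthogonal to the ideal generated by `X`. The statement is symmetric in `X` and `V`,
so this one implication gives both.
-/

open LieSubmodule LieAlgebra.InvariantForm

section

variable {R L : Type*} [CommRing R] [LieRing L] [LieAlgebra R L]

lemma lieSpan_singleton_le_normalizer_lieSpan_lie (X : L) :
    lieSpan R L ({X} : Set L) ≤ (lieSpan R L {w : L | ∃ Y : L, ⁅Y, X⁆ = w}).normalizer := by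
  rw [lieSpan_le, Set.singleton_subset_iff, SetLike.mem_coe, mem_normalizer]
  exact fun Y ↦ subset_lieSpan ⟨Y, rfl⟩

lemma lieSpan_lie_le_orthogonal_lieSpan_singleton (Φ : LinearMap.BilinForm R L)
    (hΦ : Φ.lieInvariant L) {X V : L}
    (hV : ∀ a ∈ lieSpan R L {w : L | ∃ Y : L, ⁅Y, X⁆ = w}, Φ a V = 0) :
    lieSpan R L {w : L | ∃ Y : L, ⁅Y, V⁆ = w} ≤ orthogonal Φ hΦ (lieSpan R L ({X} : Set L)) := by
  rw [lieSpan_le]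
  rintro _ ⟨Z, rfl⟩
  rw [SetLike.mem_coe, mem_orthogonal]
  intro b hb
  rw [← neg_eq_zero, ← hΦ Z b V]
  exact hV _ (lieSpan_singleton_le_normalizer_lieSpan_lie X hb Z)

lemma orthogonal_lieSpan_lie_lieSpan_singleton (Φ : LinearMap.BilinForm R L)
    (hsymm : ∀ x y : L, Φ x y = Φ y x) (hΦ : Φ.lieInvariant L) {X V : L}
    (hXV : ∀ a ∈ lieSpan R L {w : L | ∃ Y : L, ⁅Y, X⁆ = w},
      ∀ b ∈ lieSpan R L ({V} : Set L), Φ a b = 0) :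
    ∀ a ∈ lieSpan R L {w : L | ∃ Y : L, ⁅Y, V⁆ = w},
      ∀ b ∈ lieSpan R L ({X} : Set L), Φ a b = 0 := by
  intro a ha b hb
  have hV : ∀ a ∈ lieSpan R L {w : L | ∃ Y : L, ⁅Y, X⁆ = w}, Φ a V = 0 :=
    fun a ha ↦ hXV a ha V (subset_lieSpan rfl)
  rw [hsymm]
  exact (mem_orthogonal _ _ _ _).mp (lieSpan_lie_le_orthogonal_lieSpan_singleton Φ hΦ hV ha) b hb

end

theorem stmt_0_general (L : Type*) [LieRing L] [LieAlgebra ℝ L]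
    (B : L →ₗ[ℝ] L →ₗ[ℝ] ℝ)
    (hsymm : ∀ x y : L, B x y = B y x)
    (hinv : ∀ Z X Y : L, B ⁅Z, X⁆ Y = - B X ⁅Z, Y⁆)
    (X V : L) :
    ((∀ a ∈ LieSubmodule.lieSpan ℝ L {w : L | ∃ Y : L, ⁅Y, X⁆ = w},
        ∀ b ∈ LieSubmodule.lieSpan ℝ L ({V} : Set L), B a b = 0) ↔
      (∀ a ∈ LieSubmodule.lieSpan ℝ L {w : L | ∃ Y : L, ⁅Y, V⁆ = w},
        ∀ b ∈ LieSubmodule.lieSpan ℝ L ({X} : Set L), B a b = 0)) :=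
  ⟨orthogonal_lieSpan_lie_lieSpan_singleton B hsymm hinv,
    orthogonal_lieSpan_lie_lieSpan_singleton B hsymm hinv⟩

/-- For a finite-dimensional real Lie algebra `L` with an ad-invariant inner
product `B`, the Lie ideal generated by `[L, X]` is orthogonal to the Lie ideal generated by
`V` iff the Lie ideal generated by `[L, V]` is orthogonal to the Lie ideal generated by `X`. -/
theorem stmt_0 (L : Type*) [LieRing L] [LieAlgebra ℝ L] [FiniteDimensional ℝ L]
    (B : L →ₗ[ℝ] L →ₗ[ℝ] ℝ)
    (hsymm : ∀ x y : L, B x y = B y x)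
    (hpos : ∀ x : L, x ≠ 0 → 0 < B x x)
    (hinv : ∀ Z X Y : L, B ⁅Z, X⁆ Y = - B X ⁅Z, Y⁆)
    (X V : L) :
    ((∀ a ∈ LieSubmodule.lieSpan ℝ L {w : L | ∃ Y : L, ⁅Y, X⁆ = w},
        ∀ b ∈ LieSubmodule.lieSpan ℝ L ({V} : Set L), B a b = 0) ↔
      (∀ a ∈ LieSubmodule.lieSpan ℝ L {w : L | ∃ Y : L, ⁅Y, V⁆ = w},
        ∀ b ∈ LieSubmodule.lieSpan ℝ L ({X} : Set L), B a b = 0)) :=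
  stmt_0_general L B hsymm hinv X V
end

section
/- Let g be a finite-dimensional real Lie algebra equipped with an ad-invariant inner product ⟨·,·⟩, and let X, V ∈ g. Suppose the Lie ideal of g generated by [g,X] = {[Y,X] : Y ∈ g} is orthogonal to the Lie ideal generated by V. Then for all finite sequences Y₁, …, Yₖ and Z₁, …, Zₗ of elements of g, ⟨exp(ad Y₁) ∘ ⋯ ∘ exp(ad Yₖ)(X), exp(ad Z₁) ∘ ⋯ ∘ exp(ad Zₗ)(V)⟩ = ⟨X, V⟩; that is, the inner product between any point of the orbit of X and any point of the orbit of V under the group generated by the operators exp(ad Y), Y ∈ g, is the constant ⟨X,V⟩. -/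
/-!
If a subspace `S` is invariant under `f` and contains `f x`, then
`exp f x - x = ∑_{n ≥ 1} fⁿ x / n!` lies in `S`. Along the orbits this puts every
`exp(ad Y₁) ⋯ exp(ad Yₖ) X` in `X + I`, where `I` is the ideal generated by `[g, X]`, and every
`exp(ad Z₁) ⋯ exp(ad Zₗ) V` in `V + K`, where `K = J ∩ X^⊥` and `J` is the ideal generated by `V`:
`K` is ad-invariant and contains `[g, V]` because `⟨X, [Z, c]⟩ = -⟨[Z, X], c⟩` vanishes for
`c ∈ J`. Hence `⟨X + a, V + c⟩ = ⟨X, V⟩ + ⟨a, V + c⟩ + ⟨X, c⟩ = ⟨X, V⟩`.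
-/

open Module

/-- The exponential of an endomorphism of a finite-dimensional real vector space,
computed via the matrix exponential in a (fixed) basis. -/
noncomputable def expEnd {L : Type*} [AddCommGroup L] [Module ℝ L] [FiniteDimensional ℝ L]
    (f : Module.End ℝ L) : Module.End ℝ L :=
  (LinearMap.toMatrix (Module.finBasis ℝ L) (Module.finBasis ℝ L)).symm
    (NormedSpace.exp (LinearMap.toMatrix (Module.finBasis ℝ L) (Module.finBasis ℝ L) f))

/-- `exp(ad Y₁) ∘ ⋯ ∘ exp(ad Yₖ)` applied to `X` (the case of the empty list being `X`). -/
noncomputable def applyExpAds {L : Type*} [LieRing L] [LieAlgebra ℝ L]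
    [FiniteDimensional ℝ L] (Ys : List L) (X : L) : L :=
  ((Ys.map fun Y => expEnd ((LieAlgebra.ad ℝ L Y : Module.End ℝ L))).foldr (· * ·) (1 : Module.End ℝ L)) X

theorem NormedSpace.exp_sub_one_mem {𝕂 A : Type*} [RCLike 𝕂] [NormedRing A] [NormedAlgebra 𝕂 A]
    [CompleteSpace A] {P : Submodule 𝕂 A} (hP : IsClosed (P : Set A)) {a : A}
    (ha : ∀ n : ℕ, a ^ (n + 1) ∈ P) : NormedSpace.exp a - 1 ∈ P := by
  rw [congr_fun (NormedSpace.exp_eq_tsum 𝕂) a,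
    (NormedSpace.expSeries_summable' a).tsum_eq_zero_add]
  simpa using tsum_mem hP fun n => P.smul_mem _ (ha n)

attribute [local instance] Matrix.linftyOpNormedRing Matrix.linftyOpNormedAlgebra

theorem expEnd_apply_sub_self_mem {L : Type*} [AddCommGroup L] [Module ℝ L]
    [FiniteDimensional ℝ L] {S : Submodule ℝ L} {f : Module.End ℝ L}
    (hf : Set.MapsTo f S S) {x : L} (hx : f x ∈ S) : expEnd f x - x ∈ S := by
  let e := LinearMap.toMatrixAlgEquiv (Module.finBasis ℝ L)
  let P : Submodule ℝ (Module.End ℝ L) :=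
    Submodule.compatibleMaps S S ⊓ S.comap (LinearMap.applyₗ x)
  have hpow (n : ℕ) : f ^ (n + 1) ∈ P := by
    refine ⟨fun s hs => ?_, ?_⟩ <;> simp only [SetLike.mem_coe, Submodule.mem_comap,
      LinearMap.applyₗ_apply_apply, pow_succ, Module.End.mul_apply, Module.End.pow_apply]
    exacts [hf.iterate n (hf hs), hf.iterate n hx]
  have hexp : NormedSpace.exp (e f) - 1 ∈ P.comap e.symm.toLinearMap :=
    NormedSpace.exp_sub_one_mem (Submodule.closed_of_finiteDimensional _)
      fun n => by simpa [← map_pow] using hpow n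
  have hexpEnd : e.symm (NormedSpace.exp (e f) - 1) = expEnd f - 1 := by
    rw [map_sub, map_one]; rfl
  simpa [hexpEnd, P] using hexp.2

section

variable {L : Type*} [LieRing L] [LieAlgebra ℝ L] [FiniteDimensional ℝ L]

@[simp]
theorem applyExpAds_nil (X : L) : applyExpAds [] X = X := rfl

@[simp]
theorem applyExpAds_cons (Y : L) (Ys : List L) (X : L) :
    applyExpAds (Y :: Ys) X = expEnd (LieAlgebra.ad ℝ L Y) (applyExpAds Ys X) := rfl

theorem applyExpAds_sub_self_mem {S : Submodule ℝ L} (hS : ∀ Y : L, ∀ s ∈ S, ⁅Y, s⁆ ∈ S)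
    {X : L} (hX : ∀ Y : L, ⁅Y, X⁆ ∈ S) (Ys : List L) : applyExpAds Ys X - X ∈ S := by
  induction Ys with
  | nil => simp
  | cons Y Ys ih =>
    set w := applyExpAds Ys X
    have hYw : ⁅Y, w⁆ ∈ S := by simpa using S.add_mem (hX Y) (hS Y _ ih)
    simpa using S.add_mem (expEnd_apply_sub_self_mem (f := LieAlgebra.ad ℝ L Y) (hS Y) hYw) ih

end

theorem stmt_1_general (L : Type*) [LieRing L] [LieAlgebra ℝ L] [FiniteDimensional ℝ L]
    (B : L →ₗ[ℝ] L →ₗ[ℝ] ℝ)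
    (hinv : ∀ Z X Y : L, B ⁅Z, X⁆ Y = - B X ⁅Z, Y⁆)
    (X V : L)
    (horth : ∀ a ∈ LieSubmodule.lieSpan ℝ L {w : L | ∃ Y : L, ⁅Y, X⁆ = w},
        ∀ b ∈ LieSubmodule.lieSpan ℝ L ({V} : Set L), B a b = 0) :
    ∀ Ys Zs : List L, B (applyExpAds Ys X) (applyExpAds Zs V) = B X V := by
  intro Ys Zs
  set I := LieSubmodule.lieSpan ℝ L {w : L | ∃ Y : L, ⁅Y, X⁆ = w}
  set J := LieSubmodule.lieSpan ℝ L ({V} : Set L)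
  have hVJ : V ∈ J := LieSubmodule.subset_lieSpan rfl
  let K : Submodule ℝ L := (J : Submodule ℝ L) ⊓ LinearMap.ker (B X)
  have hbracket_mem (Z : L) {c : L} (hc : c ∈ J) : ⁅Z, c⁆ ∈ K := by
    refine ⟨J.lie_mem hc, LinearMap.mem_ker.2 ?_⟩
    have := hinv Z X c
    rw [horth _ (LieSubmodule.subset_lieSpan ⟨Z, rfl⟩) c hc] at this
    linarith
  have hX := applyExpAds_sub_self_mem (S := (I : Submodule ℝ L)) (fun _ _ hs => I.lie_mem hs)
    (fun Y => LieSubmodule.subset_lieSpan ⟨Y, rfl⟩) Ys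
  have hV := applyExpAds_sub_self_mem (S := K) (fun Z _ hc => hbracket_mem Z hc.1)
    (fun Z => hbracket_mem Z hVJ) Zs
  obtain ⟨a, ha, hXa⟩ : ∃ a ∈ I, applyExpAds Ys X = X + a := ⟨_, hX, by abel⟩
  obtain ⟨c, hc, hVc⟩ : ∃ c ∈ K, applyExpAds Zs V = V + c := ⟨_, hV, by abel⟩
  have haVc : B a (V + c) = 0 := horth a ha _ (J.add_mem hVJ hc.1)
  have hXc : B X c = 0 := hc.2
  simp only [hXa, hVc, map_add, LinearMap.add_apply] at haVc ⊢
  linarith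

/-- if the Lie ideal generated by `[L, X]` is orthogonal to the Lie ideal
generated by `V` (w.r.t. an ad-invariant inner product `B`), then
`B (exp(ad Y₁) ∘ ⋯ ∘ exp(ad Yₖ) X) (exp(ad Z₁) ∘ ⋯ ∘ exp(ad Zₗ) V) = B X V` for all
finite sequences `Y₁, …, Yₖ` and `Z₁, …, Zₗ` in `L`. -/
theorem stmt_1 (L : Type*) [LieRing L] [LieAlgebra ℝ L] [FiniteDimensional ℝ L]
    (B : L →ₗ[ℝ] L →ₗ[ℝ] ℝ)
    (hsymm : ∀ x y : L, B x y = B y x)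
    (hpos : ∀ x : L, x ≠ 0 → 0 < B x x)
    (hinv : ∀ Z X Y : L, B ⁅Z, X⁆ Y = - B X ⁅Z, Y⁆)
    (X V : L)
    (horth : ∀ a ∈ LieSubmodule.lieSpan ℝ L {w : L | ∃ Y : L, ⁅Y, X⁆ = w},
        ∀ b ∈ LieSubmodule.lieSpan ℝ L ({V} : Set L), B a b = 0) :
    ∀ Ys Zs : List L, B (applyExpAds Ys X) (applyExpAds Zs V) = B X V :=
  stmt_1_general L B hinv X V horth
end

section
/- Let α be an inner product on the real Lie algebra su(2) of traceless skew-Hermitian 2×2 complex matrices, let β : su(2) → ℝ be a linear functional, and let X ∈ su(2) with X ≠ 0. If the function Y ↦ √(α(Y,Y)) + β(Y) is constant on the adjoint orbit {uXu⁻¹ : u ∈ SU(2)}, then β = 0 and there exists c > 0 such that α(Y,Z) = c · ⟨Y,Z⟩_bi for all Y, Z ∈ su(2), where ⟨A,B⟩_bi = Re tr(Aᴴ B). In particular, any left-invariant Randers metric on SU(2) which has a nonzero Killing vector field of constant length in su(2) is Riemannian and bi-invariant. -/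
/-!
The adjoint action of `SU(2)` on `su(2)` is transitive on every sphere of the bi-invariant
norm: an explicit unitary conjugates `!![a i, b; -b̄, -a i]` to `!![t i, 0; 0, -t i]`, where
`t² = a² + |b|²`. So the orbit of `X` is the whole sphere through `X`. That sphere contains `-Y`
along with `Y`, so constancy of `√α + β` on it forces `β = 0` and `α(Y, Y)` constant there.
Homogeneity extends both facts to all of `su(2)`, and polarization turns
`α(Y, Y) = c ⟨Y, Y⟩_bi` into `α = c ⟨·, ·⟩_bi`.
-/

open Matrix

attribute [local instance 100] LieRing.ofAssociativeRing

/-- The real Lie algebra `su(n)` of traceless skew-Hermitian `n × n` complex matrices,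
as a Lie subalgebra of the Lie algebra of all `n × n` complex matrices (with commutator
bracket). -/
def su (n : ℕ) : LieSubalgebra ℝ (Matrix (Fin n) (Fin n) ℂ) where
  carrier := {A | Aᴴ = -A ∧ A.trace = 0}
  add_mem' := by
    rintro A B ⟨hA1, hA2⟩ ⟨hB1, hB2⟩
    constructor
    · simp [conjTranspose_add, hA1, hB1]; abel
    · simp [trace_add, hA2, hB2]
  zero_mem' := by simp
  smul_mem' := by
    rintro c A ⟨hA1, hA2⟩
    constructor
    · simp [conjTranspose_smul, hA1]
    · simp [trace_smul, hA2]
  lie_mem' := by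
    rintro A B ⟨hA1, hA2⟩ ⟨hB1, hB2⟩
    constructor
    · simp only [Ring.lie_def, conjTranspose_sub, conjTranspose_mul, hA1, hB1]
      simp only [mul_neg, neg_mul, neg_sub, neg_neg]
    · simp [Ring.lie_def, trace_sub, trace_mul_comm A B]

/-- The bi-invariant inner product `⟨A, B⟩_bi = Re tr(Aᴴ B)`. -/
noncomputable def binner {n : ℕ} (A B : Matrix (Fin n) (Fin n) ℂ) : ℝ :=
  ((Aᴴ * B).trace).re

theorem conj_mem_su {n : ℕ} (u : specialUnitaryGroup (Fin n) ℂ) {A : Matrix (Fin n) (Fin n) ℂ}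
    (hA : A ∈ su n) : (u : Matrix (Fin n) (Fin n) ℂ) * A * (u : Matrix (Fin n) (Fin n) ℂ)ᴴ ∈ su n := by
  obtain ⟨hA1, hA2⟩ := hA
  have hu : (u : Matrix (Fin n) (Fin n) ℂ)ᴴ * (u : Matrix (Fin n) (Fin n) ℂ) = 1 := by
    have hmem : (u : Matrix (Fin n) (Fin n) ℂ) ∈ unitaryGroup (Fin n) ℂ :=
      (Submonoid.mem_inf.mp u.2).1
    rw [Matrix.mem_unitaryGroup_iff'] at hmem
    simpa [Matrix.star_eq_conjTranspose] using hmem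
  constructor
  · simp only [conjTranspose_mul, conjTranspose_conjTranspose, hA1]
    simp [Matrix.mul_assoc]
  · calc ((u : Matrix (Fin n) (Fin n) ℂ) * A * (u : Matrix (Fin n) (Fin n) ℂ)ᴴ).trace
        = ((u : Matrix (Fin n) (Fin n) ℂ)ᴴ * ((u : Matrix (Fin n) (Fin n) ℂ) * A)).trace := by
          rw [trace_mul_comm]
      _ = A.trace := by rw [← Matrix.mul_assoc, hu, Matrix.one_mul]
      _ = 0 := hA2

/-- The adjoint action of `SU(n)` on `su(n)`: `Ad u X = u X u⁻¹ = u X uᴴ`. -/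
noncomputable def Ad {n : ℕ} (u : specialUnitaryGroup (Fin n) ℂ) (X : su n) : su n :=
  ⟨(u : Matrix (Fin n) (Fin n) ℂ) * (X : Matrix (Fin n) (Fin n) ℂ) *
    (u : Matrix (Fin n) (Fin n) ℂ)ᴴ, conj_mem_su u X.2⟩

section binner

variable {n : ℕ}

lemma binner_comm (A B : Matrix (Fin n) (Fin n) ℂ) : binner A B = binner B A := by
  rw [binner, binner, ← conjTranspose_conjTranspose A, ← conjTranspose_mul,
    trace_conjTranspose, conjTranspose_conjTranspose, Complex.star_def, Complex.conj_re]

lemma binner_add_left (A B C : Matrix (Fin n) (Fin n) ℂ) :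
    binner (A + B) C = binner A C + binner B C := by
  simp [binner, Matrix.add_mul]

lemma binner_smul_left (s : ℝ) (A B : Matrix (Fin n) (Fin n) ℂ) :
    binner (s • A) B = s * binner A B := by
  simp [binner]

open scoped ComplexOrder in
lemma binner_self_pos {A : Matrix (Fin n) (Fin n) ℂ} (hA : A ≠ 0) : 0 < binner A A := by
  have hnonneg : 0 ≤ (Aᴴ * A).trace := (posSemidef_conjTranspose_mul_self A).trace_nonneg
  have hne : (Aᴴ * A).trace ≠ 0 := trace_conjTranspose_mul_self_eq_zero_iff.not.mpr hA
  exact (Complex.lt_def.mp (hnonneg.lt_of_ne hne.symm)).1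

variable (n) in
noncomputable def binnerForm : LinearMap.BilinForm ℝ (su n) :=
  LinearMap.mk₂ ℝ (fun Y Z => binner (Y : Matrix (Fin n) (Fin n) ℂ) Z)
    (fun _ _ _ => binner_add_left _ _ _)
    (fun _ _ _ => binner_smul_left _ _ _)
    (fun Y _ _ => by
      simp only [binner_comm (Y : Matrix (Fin n) (Fin n) ℂ)]; exact binner_add_left _ _ _)
    (fun _ Y _ => by
      simp only [binner_comm (Y : Matrix (Fin n) (Fin n) ℂ)]; exact binner_smul_left _ _ _)

lemma binnerForm_apply (Y Z : su n) :
    binnerForm n Y Z = binner (Y : Matrix (Fin n) (Fin n) ℂ) Z :=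
  rfl

lemma binnerForm_isSymm : (binnerForm n).IsSymm :=
  ⟨fun _ _ => binner_comm _ _⟩

lemma binnerForm_self_pos {Y : su n} (hY : Y ≠ 0) : 0 < binnerForm n Y Y :=
  binner_self_pos (by simpa using hY)

end binner

namespace LinearMap.BilinForm

variable {V : Type*} [AddCommGroup V] [Module ℝ V] {B : LinearMap.BilinForm ℝ V} {r : ℝ}

lemma apply_smul_self (s : ℝ) (x : V) : B (s • x) (s • x) = s ^ 2 * B x x := by
  simp only [map_smul, smul_apply, smul_eq_mul]; ring

lemma exists_ne_zero_apply_smul_self_eq {x : V} (hx : 0 < B x x) (hr : 0 < r) :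
    ∃ s : ℝ, s ≠ 0 ∧ B (s • x) (s • x) = r := by
  refine ⟨√(r / B x x), (Real.sqrt_pos.mpr (by positivity)).ne', ?_⟩
  rw [apply_smul_self, Real.sq_sqrt (by positivity), div_mul_cancel₀ _ hx.ne']

lemma eq_zero_of_forall_apply_self_eq (hB : ∀ x, x ≠ 0 → 0 < B x x) (hr : 0 < r)
    {f : V →ₗ[ℝ] ℝ} (hf : ∀ x, B x x = r → f x = 0) : f = 0 := by
  ext x
  rcases eq_or_ne x 0 with rfl | hx
  · simp
  obtain ⟨s, hs, hsx⟩ := exists_ne_zero_apply_smul_self_eq (hB x hx) hr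
  simpa [hs] using hf _ hsx

lemma eq_smul_of_forall_apply_self_eq (hB : ∀ x, x ≠ 0 → 0 < B x x) (hr : 0 < r)
    {α : LinearMap.BilinForm ℝ V} (hα : α.IsSymm) (hBs : B.IsSymm) {k : ℝ}
    (hk : ∀ x, B x x = r → α x x = k) : α = (k / r) • B := by
  refine ext_of_isSymm hα (hBs.smul _) fun x => ?_
  rcases eq_or_ne x 0 with rfl | hx
  · simp
  obtain ⟨s, hs, hsx⟩ := exists_ne_zero_apply_smul_self_eq (hB x hx) hr
  have hαsx := hk _ hsx
  rw [apply_smul_self] at hsx hαsx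
  rw [LinearMap.smul_apply, LinearMap.smul_apply, smul_eq_mul, ← hαsx, ← hsx]
  have := (hB x hx).ne'
  field_simp

end LinearMap.BilinForm

section Ad

variable {n : ℕ}

lemma Ad_one (X : su n) : Ad 1 X = X := by
  ext1
  simp [Ad]

lemma Ad_mul (u v : specialUnitaryGroup (Fin n) ℂ) (X : su n) :
    Ad (u * v) X = Ad u (Ad v X) := by
  ext1
  simp [Ad, conjTranspose_mul, Matrix.mul_assoc]

end Ad

lemma inv_smul_mem_specialUnitaryGroup {m : Type*} [Fintype m] [DecidableEq m]
    {M : Matrix m m ℂ} {s : ℝ} (hs : s ≠ 0) (hM : M * Mᴴ = ((s ^ 2 : ℝ) : ℂ) • 1)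
    (hdet : M.det = (s : ℂ) ^ Fintype.card m) :
    (s⁻¹ : ℂ) • M ∈ specialUnitaryGroup m ℂ := by
  have hs' : (s : ℂ) ≠ 0 := Complex.ofReal_ne_zero.mpr hs
  refine mem_specialUnitaryGroup_iff.mpr ⟨?_, ?_⟩
  · rw [mem_unitaryGroup_iff, star_eq_conjTranspose, conjTranspose_smul, smul_mul_smul,
      hM, smul_smul, star_inv₀, Complex.star_def, Complex.conj_ofReal, Complex.ofReal_pow, sq,
      ← mul_assoc, inv_mul_cancel_right₀ hs', inv_mul_cancel₀ hs', one_smul]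
  · rw [det_smul, hdet, ← mul_pow, inv_mul_cancel₀ hs', one_pow]

section SU2

open Complex ComplexConjugate

noncomputable def su2Mat (a : ℝ) (b : ℂ) : Matrix (Fin 2) (Fin 2) ℂ :=
  !![a * I, b; -conj b, -(a * I)]

lemma eq_su2Mat_of_mem_su {A : Matrix (Fin 2) (Fin 2) ℂ} (hA : A ∈ su 2) :
    A = su2Mat (A 0 0).im (A 0 1) := by
  obtain ⟨hskew, htr⟩ := hA
  have hentry : ∀ i j, conj (A j i) = -A i j := fun i j => congrFun (congrFun hskew i) j
  have hre : (A 0 0).re = 0 := by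
    have := congrArg re (hentry 0 0)
    simp only [conj_re, neg_re] at this
    linarith
  rw [trace_fin_two] at htr
  ext i j
  fin_cases i <;> fin_cases j <;> simp only [su2Mat, of_apply, cons_val', cons_val_zero,
    cons_val_one, empty_val', cons_val_fin_one, Fin.zero_eta, Fin.mk_one]
  · exact Complex.ext (by simp [hre]) (by simp)
  · rw [hentry 1 0, neg_neg]
  · rw [eq_neg_of_add_eq_zero_right htr]
    congr 1
    exact Complex.ext (by simp [hre]) (by simp)

lemma binner_su2Mat (a : ℝ) (b : ℂ) :
    binner (su2Mat a b) (su2Mat a b) = 2 * (a ^ 2 + normSq b) := by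
  simp [binner, su2Mat, trace_fin_two, mul_apply, Fin.sum_univ_two, normSq_apply]
  ring

variable {a t : ℝ} {b : ℂ}

/-- For `a² + |b|² = t²` and `a ≠ t`, `√(2t(t - a))⁻¹ • su2Conjugator a t b` is unitary
and diagonalises `su2Mat a b`. -/
noncomputable def su2Conjugator (a t : ℝ) (b : ℂ) : Matrix (Fin 2) (Fin 2) ℂ :=
  !![conj b, -I * (t - a); -I * (t - a), b]

lemma conj_mul_self_of_sq_add_normSq_eq (h : a ^ 2 + normSq b = t ^ 2) :
    conj b * b = (t : ℂ) ^ 2 - (a : ℂ) ^ 2 := by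
  rw [← normSq_eq_conj_mul_self, show normSq b = t ^ 2 - a ^ 2 by linarith]
  push_cast; ring

lemma su2Conjugator_mul_conjTranspose (h : a ^ 2 + normSq b = t ^ 2) :
    su2Conjugator a t b * (su2Conjugator a t b)ᴴ = ((2 * t * (t - a) : ℝ) : ℂ) • 1 := by
  have hb := conj_mul_self_of_sq_add_normSq_eq h
  ext i j
  fin_cases i <;> fin_cases j <;>
    simp [su2Conjugator, mul_apply, Fin.sum_univ_two, conjTranspose_apply]
  · linear_combination hb - ((t : ℂ) - a) ^ 2 * I_sq
  · ring
  · ring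
  · linear_combination hb - ((t : ℂ) - a) ^ 2 * I_sq

lemma det_su2Conjugator (h : a ^ 2 + normSq b = t ^ 2) :
    (su2Conjugator a t b).det = ((2 * t * (t - a) : ℝ) : ℂ) := by
  simp [su2Conjugator, det_fin_two]
  linear_combination conj_mul_self_of_sq_add_normSq_eq h - ((t : ℂ) - a) ^ 2 * I_sq

lemma su2Conjugator_mul_su2Mat_mul_conjTranspose (h : a ^ 2 + normSq b = t ^ 2) :
    su2Conjugator a t b * su2Mat a b * (su2Conjugator a t b)ᴴ =
      ((2 * t * (t - a) : ℝ) : ℂ) • su2Mat t 0 := by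
  have hb := conj_mul_self_of_sq_add_normSq_eq h
  ext i j
  fin_cases i <;> fin_cases j <;>
    simp [su2Conjugator, su2Mat, mul_apply, Fin.sum_univ_two, conjTranspose_apply]
  · linear_combination I * (2 * t - a) * hb + I * a * (t - a) ^ 2 * I_sq
  · linear_combination conj b * hb + conj b * (t ^ 2 - a ^ 2) * I_sq
  · linear_combination -b * hb - b * (t ^ 2 - a ^ 2) * I_sq
  · linear_combination -I * (2 * t - a) * hb - I * a * (t - a) ^ 2 * I_sq

lemma exists_conj_su2Mat_eq_diag (ht : 0 ≤ t) (h : a ^ 2 + normSq b = t ^ 2) :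
    ∃ u : specialUnitaryGroup (Fin 2) ℂ,
      (u : Matrix (Fin 2) (Fin 2) ℂ) * su2Mat a b * (u : Matrix (Fin 2) (Fin 2) ℂ)ᴴ =
        su2Mat t 0 := by
  rcases eq_or_ne a t with rfl | hat
  · have hb : b = 0 := normSq_eq_zero.mp (by linarith)
    exact ⟨1, by simp [hb]⟩
  have hc : 0 < 2 * t * (t - a) := by
    have hle : a ≤ t := abs_le_of_sq_le_sq' (by linarith [normSq_nonneg b]) ht |>.2
    have hlt : a < t := hle.lt_of_ne hat
    have : 0 < t := by nlinarith [normSq_nonneg b]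
    positivity
  set s := √(2 * t * (t - a))
  have hs2 : s ^ 2 = 2 * t * (t - a) := Real.sq_sqrt hc.le
  have hs : s ≠ 0 := (Real.sqrt_pos.mpr hc).ne'
  have hmem := inv_smul_mem_specialUnitaryGroup hs
    (by rw [hs2]; exact su2Conjugator_mul_conjTranspose h)
    (by rw [Fintype.card_fin, det_su2Conjugator h, ← ofReal_pow, hs2])
  refine ⟨⟨_, hmem⟩, ?_⟩
  simp only [conjTranspose_smul, star_inv₀, Complex.star_def, conj_ofReal, Matrix.smul_mul,
    Matrix.mul_smul, smul_smul, su2Conjugator_mul_su2Mat_mul_conjTranspose h, ← hs2]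
  have hs' : (s : ℂ) ≠ 0 := ofReal_ne_zero.mpr hs
  rw [ofReal_pow, sq, inv_mul_cancel_left₀ hs', inv_mul_cancel₀ hs', one_smul]

lemma exists_Ad_eq_su2Mat (X : su 2) :
    ∃ u, (Ad u X : Matrix (Fin 2) (Fin 2) ℂ) =
      su2Mat √(binner (X : Matrix (Fin 2) (Fin 2) ℂ) X / 2) 0 := by
  set A := (X : Matrix (Fin 2) (Fin 2) ℂ)
  have hA : A = su2Mat (A 0 0).im (A 0 1) := eq_su2Mat_of_mem_su X.2
  have hbin : binner A A / 2 = (A 0 0).im ^ 2 + normSq (A 0 1) := by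
    have := binner_su2Mat (A 0 0).im (A 0 1)
    rw [← hA] at this
    linarith
  have hnonneg : 0 ≤ binner A A / 2 := hbin ▸ add_nonneg (sq_nonneg _) (normSq_nonneg _)
  obtain ⟨u, hu⟩ := exists_conj_su2Mat_eq_diag (a := (A 0 0).im) (b := A 0 1)
    (Real.sqrt_nonneg (binner A A / 2)) (by rw [Real.sq_sqrt hnonneg, hbin])
  refine ⟨u, ?_⟩
  rw [← hu, ← hA]
  rfl

theorem exists_Ad_eq_of_binnerForm_self_eq {X Y : su 2}
    (h : binnerForm 2 Y Y = binnerForm 2 X X) : ∃ u, Y = Ad u X := by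
  obtain ⟨u, hu⟩ := exists_Ad_eq_su2Mat X
  obtain ⟨v, hv⟩ := exists_Ad_eq_su2Mat Y
  have hvu : Ad v Y = Ad u X :=
    Subtype.ext (by rw [hu, hv, ← binnerForm_apply, ← binnerForm_apply, h])
  refine ⟨v⁻¹ * u, ?_⟩
  rw [Ad_mul, ← hvu, ← Ad_mul, inv_mul_cancel, Ad_one]

end SU2

/-- if `α` is an inner product on `su(2)`, `β` a linear functional, `X ≠ 0`,
and `Y ↦ √(α(Y,Y)) + β(Y)` is constant on the adjoint orbit of `X`, then `β = 0` and `α`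
is a positive multiple of the bi-invariant inner product. -/
theorem stmt_6
    (α : (su 2) →ₗ[ℝ] (su 2) →ₗ[ℝ] ℝ)
    (hsymm : ∀ x y : su 2, α x y = α y x)
    (hpos : ∀ x : su 2, x ≠ 0 → 0 < α x x)
    (β : (su 2) →ₗ[ℝ] ℝ)
    (X : su 2) (hX : X ≠ 0)
    (hconst : ∃ l : ℝ, ∀ Y : su 2,
      (∃ u : specialUnitaryGroup (Fin 2) ℂ, Y = Ad u X) →
        Real.sqrt (α Y Y) + β Y = l) :
    β = 0 ∧ ∃ c : ℝ, 0 < c ∧ ∀ Y Z : su 2,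
      α Y Z = c * binner (Y : Matrix (Fin 2) (Fin 2) ℂ) (Z : Matrix (Fin 2) (Fin 2) ℂ) := by
  obtain ⟨l, hl⟩ := hconst
  have hB : ∀ Y : su 2, Y ≠ 0 → 0 < binnerForm 2 Y Y := fun _ => binnerForm_self_pos
  have hα_nonneg : ∀ Y, 0 ≤ α Y Y := fun Y => by
    rcases eq_or_ne Y 0 with rfl | hY
    · simp
    · exact (hpos Y hY).le
  have on_sphere : ∀ Y, binnerForm 2 Y Y = binnerForm 2 X X → β Y = 0 ∧ √(α Y Y) = l := by
    intro Y hY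
    have h₁ := hl Y (exists_Ad_eq_of_binnerForm_self_eq hY)
    have h₂ := hl (-Y) (exists_Ad_eq_of_binnerForm_self_eq (by simpa using hY))
    simp only [map_neg, LinearMap.neg_apply, neg_neg] at h₂
    constructor <;> linarith
  refine ⟨LinearMap.BilinForm.eq_zero_of_forall_apply_self_eq hB (hB X hX)
    fun Y hY => (on_sphere Y hY).1, α X X / binnerForm 2 X X, div_pos (hpos X hX) (hB X hX), ?_⟩
  have hαB : α = (α X X / binnerForm 2 X X) • binnerForm 2 :=
    LinearMap.BilinForm.eq_smul_of_forall_apply_self_eq hB (hB X hX) ⟨hsymm⟩ binnerForm_isSymm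
      fun Y hY => (Real.sqrt_inj (hα_nonneg Y) (hα_nonneg X)).mp <|
        (on_sphere Y hY).2.trans (on_sphere X rfl).2.symm
  intro Y Z
  exact LinearMap.congr_fun₂ hαB Y Z
end

section
/- Let Γ ⊂ O(2) be the subgroup of order 6 generated by the rotation of ℝ² by angle 2π/3 and the reflection across the first coordinate axis, and let v ∈ ℝ² be such that the orbit Γ·v consists of exactly 6 distinct points. Let q be a positive definite quadratic form on ℝ², β a linear functional on ℝ², and c ∈ ℝ, and suppose q(w) + β(w) = c for every w ∈ Γ·v. Then β = 0 and q(x) = (c/⟨v,v⟩)·⟨x,x⟩ for all x ∈ ℝ², where ⟨·,·⟩ is the standard inner product; that is, any ellipse passing through the six points of the orbit is the circle through them centered at the origin. -/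
/-- Rotation of `ℝ²` by the angle `2π/3`, as a linear automorphism. -/
noncomputable def rot23 : (ℝ × ℝ) ≃ₗ[ℝ] (ℝ × ℝ) where
  toFun p := (Real.cos (2 * Real.pi / 3) * p.1 - Real.sin (2 * Real.pi / 3) * p.2,
              Real.sin (2 * Real.pi / 3) * p.1 + Real.cos (2 * Real.pi / 3) * p.2)
  invFun p := (Real.cos (2 * Real.pi / 3) * p.1 + Real.sin (2 * Real.pi / 3) * p.2,
              -(Real.sin (2 * Real.pi / 3)) * p.1 + Real.cos (2 * Real.pi / 3) * p.2)
  map_add' a b := by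
    apply Prod.ext <;> simp <;> ring
  map_smul' c a := by
    apply Prod.ext <;> simp <;> ring
  left_inv p := by
    have h := Real.sin_sq_add_cos_sq (2 * Real.pi / 3)
    refine Prod.ext ?_ ?_
    · simp only
      linear_combination p.1 * h
    · simp only
      linear_combination p.2 * h
  right_inv p := by
    have h := Real.sin_sq_add_cos_sq (2 * Real.pi / 3)
    refine Prod.ext ?_ ?_
    · simp only
      linear_combination p.1 * h
    · simp only
      linear_combination p.2 * h

/-- Reflection of `ℝ²` across the first coordinate axis, as a linear automorphism. -/
noncomputable def reflx : (ℝ × ℝ) ≃ₗ[ℝ] (ℝ × ℝ) where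
  toFun p := (p.1, -p.2)
  invFun p := (p.1, -p.2)
  map_add' a b := by apply Prod.ext <;> simp <;> ring
  map_smul' c a := by apply Prod.ext <;> simp
  left_inv p := by apply Prod.ext <;> simp
  right_inv p := by apply Prod.ext <;> simp

/-!
The orbit of `v` is the hexagon `v, Rv, R²v, Fv, RFv, R²Fv`, and it has six points exactly when
`v` lies on none of the three mirror lines of `Γ`. Comparing the conic equation at a point and at
its mirror image across the first axis kills the `xy`-coefficient of `q` and the `y`-coefficient
of `β`; two such pairs with distinct abscissae suffice. What remains, `a x² + d y² + p x = c`,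
evaluated at `v, Rv, R²v` is a linear system in `a, d, p` whose only solution is `p = 0`,
`a = d = c / |v|²`.
-/

open Set Real QuadraticMap

theorem Subgroup.mapsTo_smul_of_mem_closure {G α : Type*} [Group G] [MulAction G α]
    {s : Set G} {S : Set α} (hS : S.Finite) (hs : ∀ g ∈ s, MapsTo (g • ·) S S) {g : G}
    (hg : g ∈ Subgroup.closure s) : MapsTo (g • ·) S S := by
  induction hg using Subgroup.closure_induction with
  | mem g hg => exact hs g hg
  | one => exact fun w hw => by simpa using hw
  | mul g h _ _ hg hh => simpa [Function.comp_def, mul_smul] using hg.comp hh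
  | inv g _ hg =>
    intro w hw
    obtain ⟨u, hu, rfl⟩ := ((hS.injOn_iff_bijOn_of_mapsTo hg).mp
      (MulAction.injective g).injOn).surjOn hw
    simpa using hu

theorem Set.notMem_of_ncard_eq_six {α : Type*} {a b c d e f : α}
    (h : ({a, b, c, d, e, f} : Set α).ncard = 6) : a ∉ ({b, c, d, e, f} : Set α) := by
  classical
  intro ha
  rw [insert_eq_of_mem ha] at h
  have : ({b, c, d, e, f} : Set α).ncard ≤ 5 := by
    simpa [← Finset.coe_insert, ← Finset.coe_singleton, ncard_coe_finset] using
      Finset.card_le_five (a := b) (b := c) (c := d) (d := e) (e := f)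
  omega

theorem QuadraticMap.apply_prod {R N : Type*} [CommRing R] [AddCommGroup N] [Module R N]
    (Q : QuadraticMap R (R × R) N) (w : R × R) :
    Q w = (w.1 * w.1) • Q (1, 0) + (w.1 * w.2) • polar Q (1, 0) (0, 1) +
      (w.2 * w.2) • Q (0, 1) := by
  have hw : w = w.1 • ((1 : R), (0 : R)) + w.2 • ((0 : R), (1 : R)) := by ext <;> simp
  conv_lhs => rw [hw]
  rw [QuadraticMap.map_add (⇑Q), QuadraticMap.map_smul, QuadraticMap.map_smul,
    polar_smul_left, polar_smul_right, smul_smul]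
  abel

theorem LinearMap.apply_prod {R M : Type*} [CommSemiring R] [AddCommMonoid M] [Module R M]
    (f : R × R →ₗ[R] M) (w : R × R) : f w = w.1 • f (1, 0) + w.2 • f (0, 1) := by
  rw [← map_smul, ← map_smul, ← map_add]
  simp

theorem rot23_apply (p : ℝ × ℝ) :
    rot23 p = (-(p.1 + √3 * p.2) / 2, (√3 * p.1 - p.2) / 2) := by
  have hcos : Real.cos (2 * π / 3) = -(1 / 2) := by
    rw [show 2 * π / 3 = π - π / 3 by ring, Real.cos_pi_sub, Real.cos_pi_div_three]
  have hsin : Real.sin (2 * π / 3) = √3 / 2 := by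
    rw [show 2 * π / 3 = π - π / 3 by ring, Real.sin_pi_sub, Real.sin_pi_div_three]
  change (Real.cos _ * p.1 - Real.sin _ * p.2, Real.sin _ * p.1 + Real.cos _ * p.2) = _
  rw [hcos, hsin]
  ext <;> ring

theorem rot23_rot23_apply (p : ℝ × ℝ) :
    rot23 (rot23 p) = ((√3 * p.2 - p.1) / 2, -(√3 * p.1 + p.2) / 2) := by
  have h3 : √3 * √3 = 3 := Real.mul_self_sqrt (by norm_num)
  simp only [rot23_apply]
  ext
  · linear_combination -p.1 / 4 * h3
  · linear_combination -p.2 / 4 * h3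

theorem reflx_apply (p : ℝ × ℝ) : reflx p = (p.1, -p.2) := rfl

theorem rot23_rot23_rot23 (p : ℝ × ℝ) : rot23 (rot23 (rot23 p)) = p := by
  have h3 : √3 * √3 = 3 := Real.mul_self_sqrt (by norm_num)
  simp only [rot23_apply]
  ext
  · linear_combination (3 * p.1 + √3 * p.2) / 8 * h3
  · linear_combination (3 * p.2 - √3 * p.1) / 8 * h3

theorem reflx_reflx (p : ℝ × ℝ) : reflx (reflx p) = p := by
  simp [reflx_apply]

theorem reflx_rot23 (p : ℝ × ℝ) : reflx (rot23 p) = rot23 (rot23 (reflx p)) := by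
  have h3 : √3 * √3 = 3 := Real.mul_self_sqrt (by norm_num)
  simp only [rot23_apply, reflx_apply]
  ext
  · linear_combination p.1 / 4 * h3
  · linear_combination -p.2 / 4 * h3

def hexOrbit (v : ℝ × ℝ) : Set (ℝ × ℝ) :=
  {v, rot23 v, rot23 (rot23 v), reflx v, rot23 (reflx v), rot23 (rot23 (reflx v))}

theorem setOf_exists_mem_closure_apply_eq (v : ℝ × ℝ) :
    {w : ℝ × ℝ | ∃ g ∈ Subgroup.closure ({rot23, reflx} : Set ((ℝ × ℝ) ≃ₗ[ℝ] (ℝ × ℝ))),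
      g v = w} = hexOrbit v := by
  ext w
  constructor
  · rintro ⟨g, hg, rfl⟩
    refine Subgroup.mapsTo_smul_of_mem_closure (by simp [hexOrbit]) ?_ hg (by simp [hexOrbit])
    rintro g (rfl | rfl) u (rfl | rfl | rfl | rfl | rfl | rfl) <;>
      simp [hexOrbit, rot23_rot23_rot23, reflx_reflx, reflx_rot23]
  · have hr : rot23 ∈ Subgroup.closure ({rot23, reflx} : Set ((ℝ × ℝ) ≃ₗ[ℝ] (ℝ × ℝ))) :=
      Subgroup.subset_closure (by simp)
    have hf : reflx ∈ Subgroup.closure ({rot23, reflx} : Set ((ℝ × ℝ) ≃ₗ[ℝ] (ℝ × ℝ))) :=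
      Subgroup.subset_closure (by simp)
    rintro (rfl | rfl | rfl | rfl | rfl | rfl)
    exacts [⟨1, one_mem _, rfl⟩, ⟨_, hr, rfl⟩, ⟨_, mul_mem hr hr, rfl⟩, ⟨_, hf, rfl⟩,
      ⟨_, mul_mem hr hf, rfl⟩, ⟨_, mul_mem (mul_mem hr hr) hf, rfl⟩]

theorem ne_zero_of_ncard_hexOrbit_eq_six {v : ℝ × ℝ} (h : (hexOrbit v).ncard = 6) :
    v.2 ≠ 0 ∧ √3 * v.1 - v.2 ≠ 0 ∧ √3 * v.1 + v.2 ≠ 0 := by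
  have h3 : √3 * √3 = 3 := Real.mul_self_sqrt (by norm_num)
  have hv := Set.notMem_of_ncard_eq_six h
  simp only [mem_insert_iff, mem_singleton_iff, not_or, Prod.ext_iff, reflx_apply,
    rot23_apply] at hv
  obtain ⟨-, -, h₁, h₂, h₃⟩ := hv
  refine ⟨fun hy => h₁ ⟨trivial, by linarith⟩, fun hm => h₂ ⟨?_, ?_⟩, fun hn => h₃ ⟨?_, ?_⟩⟩
  · linear_combination (-v.1 / 2) * h3 + (√3 / 2) * hm
  · linear_combination (-1 / 2) * hm
  · linear_combination (-v.1 / 4) * h3 + (√3 / 2) * hn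
  · linear_combination (-v.2 / 4) * h3 + (1 / 2) * hn

section Conic

variable (q : QuadraticForm ℝ (ℝ × ℝ)) (β : (ℝ × ℝ) →ₗ[ℝ] ℝ)

theorem polar_mul_add_eq_zero_of_apply_reflx {w : ℝ × ℝ} (hw : w.2 ≠ 0)
    (h : q (reflx w) + β (reflx w) = q w + β w) :
    polar q (1, 0) (0, 1) * w.1 + β (0, 1) = 0 := by
  rw [q.apply_prod (reflx w), q.apply_prod w, β.apply_prod (reflx w), β.apply_prod w,
    reflx_apply] at h
  simp only [smul_eq_mul] at h
  have : w.2 * (polar q (1, 0) (0, 1) * w.1 + β (0, 1)) = 0 := by linear_combination -h / 2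
  exact (mul_eq_zero.mp this).resolve_left hw

variable {q β} {c : ℝ} {v : ℝ × ℝ}

theorem polar_eq_zero_and_apply_eq_zero_of_hexOrbit (hy : v.2 ≠ 0) (hm : √3 * v.1 - v.2 ≠ 0)
    (hn : √3 * v.1 + v.2 ≠ 0) (h : ∀ w ∈ hexOrbit v, q w + β w = c) :
    polar q (1, 0) (0, 1) = 0 ∧ β (0, 1) = 0 := by
  have h₁ := polar_mul_add_eq_zero_of_apply_reflx q β (w := rot23 v)
    (by rw [rot23_apply]; exact div_ne_zero hm two_ne_zero)
    (by rw [reflx_rot23, h _ (by simp [hexOrbit]), h _ (by simp [hexOrbit])])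
  have h₂ := polar_mul_add_eq_zero_of_apply_reflx q β (w := rot23 (rot23 v))
    (by rw [rot23_rot23_apply]; exact div_ne_zero (neg_ne_zero.mpr hn) two_ne_zero)
    (by rw [reflx_rot23, reflx_rot23, rot23_rot23_rot23, h _ (by simp [hexOrbit]),
      h _ (by simp [hexOrbit])])
  rw [rot23_apply] at h₁
  rw [rot23_rot23_apply] at h₂
  have hB : polar q (1, 0) (0, 1) * (√3 * v.2) = 0 := by linear_combination h₂ - h₁
  have hB : polar q (1, 0) (0, 1) = 0 :=
    (mul_eq_zero.mp hB).resolve_right (mul_ne_zero (by positivity) hy)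
  exact ⟨hB, by linear_combination h₁ - (-(v.1 + √3 * v.2) / 2) * hB⟩

theorem apply_eq_zero_and_apply_eq_of_hexOrbit (hy : v.2 ≠ 0) (hm : √3 * v.1 - v.2 ≠ 0)
    (hn : √3 * v.1 + v.2 ≠ 0) (hB : polar q (1, 0) (0, 1) = 0) (hr : β (0, 1) = 0)
    (h : ∀ w ∈ hexOrbit v, q w + β w = c) :
    β (1, 0) = 0 ∧ q (0, 1) = q (1, 0) ∧ q (1, 0) * (v.1 * v.1 + v.2 * v.2) = c := by
  have h3 : √3 * √3 = 3 := Real.mul_self_sqrt (by norm_num)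
  have hconic : ∀ w ∈ hexOrbit v,
      q (1, 0) * (w.1 * w.1) + q (0, 1) * (w.2 * w.2) + β (1, 0) * w.1 = c := by
    intro w hw
    rw [← h w hw, q.apply_prod w, β.apply_prod w, hB, hr]
    simp only [smul_eq_mul]
    ring
  have E₀ := hconic v (by simp [hexOrbit])
  have E₁ := hconic (rot23 v) (by simp [hexOrbit])
  have E₂ := hconic (rot23 (rot23 v)) (by simp [hexOrbit])
  rw [rot23_apply] at E₁
  rw [rot23_rot23_apply] at E₂
  set a := q (1, 0)
  set d := q (0, 1)
  set p := β (1, 0)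
  have hp : √3 * v.2 * (a * v.1 - d * v.1 - p) = 0 := by linear_combination E₁ - E₂
  have hp : a * v.1 - d * v.1 - p = 0 :=
    (mul_eq_zero.mp hp).resolve_left (mul_ne_zero (by positivity) hy)
  have hd : (a - d) * ((√3 * v.1 - v.2) * (√3 * v.1 + v.2)) = 0 := by
    linear_combination (-2 / 3) * (E₁ + E₂ - 2 * E₀) + ((a * v.2 * v.2 + d * v.1 * v.1) / 3) * h3
      + 2 * v.1 * hp + (a - d) * v.1 * v.1 * h3
  have hd : d = a := by
    linear_combination -(mul_eq_zero.mp hd).resolve_right (mul_ne_zero hm hn)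
  have hp : p = 0 := by linear_combination -hp - v.1 * hd
  exact ⟨hp, hd, by linear_combination E₀ - v.2 * v.2 * hd - v.1 * hp⟩

end Conic

theorem stmt_9_general (v : ℝ × ℝ)
    (horb : Set.ncard {w : ℝ × ℝ | ∃ g ∈ Subgroup.closure ({rot23, reflx} :
      Set ((ℝ × ℝ) ≃ₗ[ℝ] (ℝ × ℝ))), g v = w} = 6)
    (q : QuadraticForm ℝ (ℝ × ℝ))
    (β : (ℝ × ℝ) →ₗ[ℝ] ℝ) (c : ℝ)
    (hellipse : ∀ w ∈ {w : ℝ × ℝ | ∃ g ∈ Subgroup.closure ({rot23, reflx} :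
      Set ((ℝ × ℝ) ≃ₗ[ℝ] (ℝ × ℝ))), g v = w}, q w + β w = c) :
    β = 0 ∧ ∀ x : ℝ × ℝ,
      q x = (c / (v.1 * v.1 + v.2 * v.2)) * (x.1 * x.1 + x.2 * x.2) := by
  rw [setOf_exists_mem_closure_apply_eq] at horb hellipse
  obtain ⟨hy, hm, hn⟩ := ne_zero_of_ncard_hexOrbit_eq_six horb
  obtain ⟨hB, hr⟩ := polar_eq_zero_and_apply_eq_zero_of_hexOrbit hy hm hn hellipse
  obtain ⟨hp, hd, ha⟩ := apply_eq_zero_and_apply_eq_of_hexOrbit hy hm hn hB hr hellipse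
  have hv : v.1 * v.1 + v.2 * v.2 ≠ 0 :=
    (add_pos_of_nonneg_of_pos (mul_self_nonneg _) (mul_self_pos.mpr hy)).ne'
  refine ⟨LinearMap.prod_ext (LinearMap.ext_ring ?_) (LinearMap.ext_ring ?_), fun x => ?_⟩
  · simpa using hp
  · simpa using hr
  · rw [q.apply_prod, hB, hd, ← ha, mul_div_cancel_right₀ _ hv]
    simp only [smul_eq_mul]
    ring

/-- if `Γ ⊂ O(2)` is the order-6 subgroup generated by the rotation by `2π/3`
and the reflection across the first axis, `v ∈ ℝ²` has an orbit `Γ·v` of exactly 6 points,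
and the ellipse `q + β = c` passes through all six points, then `β = 0` and
`q(x) = (c/⟨v,v⟩)·⟨x,x⟩`. -/
theorem stmt_9 (v : ℝ × ℝ)
    (horb : Set.ncard {w : ℝ × ℝ | ∃ g ∈ Subgroup.closure ({rot23, reflx} :
      Set ((ℝ × ℝ) ≃ₗ[ℝ] (ℝ × ℝ))), g v = w} = 6)
    (q : QuadraticForm ℝ (ℝ × ℝ)) (hq : q.PosDef)
    (β : (ℝ × ℝ) →ₗ[ℝ] ℝ) (c : ℝ)
    (hellipse : ∀ w ∈ {w : ℝ × ℝ | ∃ g ∈ Subgroup.closure ({rot23, reflx} :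
      Set ((ℝ × ℝ) ≃ₗ[ℝ] (ℝ × ℝ))), g v = w}, q w + β w = c) :
    β = 0 ∧ ∀ x : ℝ × ℝ,
      q x = (c / (v.1 * v.1 + v.2 * v.2)) * (x.1 * x.1 + x.2 * x.2) :=
  stmt_9_general v horb q β c hellipse
end
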